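/- arXiv:2005.09713 — 11 statements merged into one kernel-verified Lean document; each statement's English description precedes it below -/
import Mathlib

section
/- (Pulling lemma, part 1) Let X ⊆ ℤⁿ, 1 ≤ u ≤ n, let f ∈ C(X,c_u) be a c_u-continuous self-map, and let q, q' ∈ X with q c_u-adjacent to q'. If for some coordinate i we have p_i(f(q)) > p_i(q) > p_i(q'), then p_i(f(q')) > p_i(q'). -/
/-- `c_u`-adjacency on `ℤⁿ`. -/
def cuAdj (u n : ℕ) (x y : Fin n → ℤ) : Prop :=
  x ≠ y ∧ (∀ i, x i ≠ y i → |x i - y i| = 1) ∧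
    (Finset.univ.filter (fun i => x i ≠ y i)).card ≤ u

/-- Pulling lemma, part 1. -/
theorem stmt4 (n u : ℕ) (hu1 : 1 ≤ u) (hun : u ≤ n)
    (X : Set (Fin n → ℤ)) (f : (Fin n → ℤ) → (Fin n → ℤ))
    (hmaps : Set.MapsTo f X X)
    (hcont : ∀ x ∈ X, ∀ x' ∈ X, cuAdj u n x x' →
      f x = f x' ∨ cuAdj u n (f x) (f x'))
    (q q' : Fin n → ℤ) (hq : q ∈ X) (hq' : q' ∈ X)
    (hadj : cuAdj u n q q') (i : Fin n)
    (h : f q i > q i ∧ q i > q' i) :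
    f q' i > q' i := by
  obtain ⟨h1, h2⟩ := h
  have hne : q i ≠ q' i := by omega
  have habs : |q i - q' i| = 1 := hadj.2.1 i hne
  rw [abs_eq (by norm_num)] at habs
  rcases hcont q hq q' hq' hadj with he | hfadj
  · have : f q i = f q' i := by rw [he]
    omega
  · by_cases hfe : f q i = f q' i
    · omega
    · have := hfadj.2.1 i hfe
      rw [abs_eq (by norm_num)] at this
      omega
end

section
/- (Pulling lemma, part 2) Let X ⊆ ℤⁿ, 1 ≤ u ≤ n, let f ∈ C(X,c_u), and let q, q' ∈ X with q c_u-adjacent to q'. If for some coordinate i we have p_i(f(q)) < p_i(q) < p_i(q'), then p_i(f(q')) < p_i(q'). -/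
/-- Pulling lemma, part 2. -/
theorem stmt5 (n u : ℕ) (hu1 : 1 ≤ u) (hun : u ≤ n)
    (X : Set (Fin n → ℤ)) (f : (Fin n → ℤ) → (Fin n → ℤ))
    (hmaps : Set.MapsTo f X X)
    (hcont : ∀ x ∈ X, ∀ x' ∈ X, cuAdj u n x x' →
      f x = f x' ∨ cuAdj u n (f x) (f x'))
    (q q' : Fin n → ℤ) (hq : q ∈ X) (hq' : q' ∈ X)
    (hadj : cuAdj u n q q') (i : Fin n)
    (h : f q i < q i ∧ q i < q' i) :
    f q' i < q' i := by
  obtain ⟨h1, h2⟩ := h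
  rcases hcont q hq q' hq' hadj with heq | ⟨_, hd, _⟩
  · rw [← heq]; omega
  · by_cases hne : f q i = f q' i
    · omega
    · have := hd i hne
      have := abs_le.mp this.le
      omega
end

section
/- If f is a c_u-continuous self-map of X ⊆ ℤⁿ, and x, x' ∈ Fix(f) are such that there is a unique shortest c_u-path P in X from x to x', then every point of P is a fixed point of f. -/
/-- `c` (restricted to indices `0,…,k`) is a `c_u`-path of length `k`
in `X` from `x` to `x'`. -/
def IsPath (u n : ℕ) (X : Set (Fin n → ℤ)) (c : ℕ → Fin n → ℤ) (k : ℕ)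
    (x x' : Fin n → ℤ) : Prop :=
  c 0 = x ∧ c k = x' ∧ (∀ i ≤ k, c i ∈ X) ∧
    ∀ i < k, c i = c (i + 1) ∨ cuAdj u n (c i) (c (i + 1))

/-- If `x, x'` are fixed points of a `c_u`-continuous self-map and there is a
unique shortest `c_u`-path `P` in `X` from `x` to `x'`, then every point
of `P` is fixed. -/
theorem stmt6 (n u : ℕ) (hu1 : 1 ≤ u) (hun : u ≤ n)
    (X : Set (Fin n → ℤ)) (f : (Fin n → ℤ) → (Fin n → ℤ))
    (hmaps : Set.MapsTo f X X)
    (hcont : ∀ x ∈ X, ∀ x' ∈ X, cuAdj u n x x' →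
      f x = f x' ∨ cuAdj u n (f x) (f x'))
    (x x' : Fin n → ℤ) (hx : x ∈ X) (hx' : x' ∈ X)
    (hfx : f x = x) (hfx' : f x' = x')
    (c : ℕ → Fin n → ℤ) (k : ℕ)
    (hP : IsPath u n X c k x x')
    (hshort : ∀ (c' : ℕ → Fin n → ℤ) (k' : ℕ), IsPath u n X c' k' x x' → k ≤ k')
    (huniq : ∀ (c' : ℕ → Fin n → ℤ), IsPath u n X c' k x x' →
      ∀ i ≤ k, c' i = c i) :
    ∀ i ≤ k, f (c i) = c i := by
  obtain ⟨h0, hk, hmem, hadj⟩ := hP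
  have : IsPath u n X (fun i => f (c i)) k x x' := by
    refine ⟨by show f (c 0) = x; rw [h0, hfx], by show f (c k) = x'; rw [hk, hfx'],
      fun i hi => hmaps (hmem i hi), fun i hi => ?_⟩
    rcases hadj i hi with h | h
    · exact Or.inl (by show f (c i) = f (c (i+1)); rw [h])
    · exact hcont _ (hmem i hi.le) _ (hmem (i+1) hi) h
  exact huniq _ this
end

section
/- For a finite subset X ⊆ ℤⁿ and any 1 ≤ u ≤ n, the boundary Bd(X) is a freezing set for (X,c_u): every c_u-continuous self-map of X that fixes every point of Bd(X) is the identity function. -/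
/-- The boundary of `X ⊆ ℤⁿ`: points of `X` that are `c₁`-adjacent to a point
outside `X`. -/
def Bd (n : ℕ) (X : Set (Fin n → ℤ)) : Set (Fin n → ℤ) :=
  {x ∈ X | ∃ y, y ∉ X ∧ cuAdj 1 n y x}

/-- Two points differing only in coordinate `i` by `±1` are `c_u`-adjacent for `u ≥ 1`. -/
lemma cuAdj_step (n u : ℕ) (hu1 : 1 ≤ u) (i : Fin n) (a b : Fin n → ℤ)
    (hi : |a i - b i| = 1) (hoth : ∀ j, j ≠ i → a j = b j) : cuAdj u n a b := by
  have hne : a i ≠ b i := by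
    intro h; rw [h] at hi; simp at hi
  refine ⟨fun h => hne (congrFun h i), fun j hj => ?_, ?_⟩
  · by_cases hji : j = i
    · subst hji; exact hi
    · exact absurd (hoth j hji) hj
  · calc (Finset.univ.filter (fun j => a j ≠ b j)).card
        ≤ ({i} : Finset (Fin n)).card := by
          apply Finset.card_le_card
          intro j hj
          simp only [Finset.mem_filter, Finset.mem_univ, true_and] at hj
          simp only [Finset.mem_singleton]
          by_contra hji; exact hj (hoth j hji)
      _ = 1 := Finset.card_singleton i
      _ ≤ u := hu1

/-- Key one-sided estimate: walking from `x` in direction `ε·eᵢ` until leaving `X`. -/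
lemma walk_bound (n u : ℕ) (hu1 : 1 ≤ u)
    (X : Set (Fin n → ℤ)) (hfin : X.Finite)
    (f : (Fin n → ℤ) → (Fin n → ℤ))
    (hmaps : Set.MapsTo f X X)
    (hcont : ∀ x ∈ X, ∀ x' ∈ X, cuAdj u n x x' →
      f x = f x' ∨ cuAdj u n (f x) (f x'))
    (hfix : ∀ x ∈ Bd n X, f x = x)
    (x : Fin n → ℤ) (hx : x ∈ X) (i : Fin n) (ε : ℤ) (hε : ε = 1 ∨ ε = -1) :
    ∃ k : ℕ, |f x i - (x i + ε * k)| ≤ k := by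
  classical
  have hεne : ε ≠ 0 := by rcases hε with h | h <;> simp [h]
  have hεabs : |ε| = 1 := by rcases hε with h | h <;> simp [h]
  set p : ℕ → (Fin n → ℤ) := fun k j => if j = i then x i + ε * k else x j with hp
  have hp0 : p 0 = x := by
    funext j; by_cases hj : j = i <;> simp [hp, hj]
  have hpval : ∀ k, p k i = x i + ε * k := by intro k; simp [hp]
  have hpoth : ∀ k j, j ≠ i → p k j = x j := by intro k j hj; simp [hp, hj]
  -- adjacency of consecutive points
  have hadj : ∀ (v : ℕ) (k l : ℕ), l = k + 1 → cuAdj v n (p k) (p l) → True := fun _ _ _ _ _ => trivial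
  have hstepadj : ∀ (v : ℕ), 1 ≤ v → ∀ k : ℕ, cuAdj v n (p (k+1)) (p k) := by
    intro v hv k
    apply cuAdj_step n v hv i
    · rw [hpval, hpval]
      push_cast
      have : x i + ε * (k + 1) - (x i + ε * k) = ε := by ring
      rw [this, hεabs]
    · intro j hj; rw [hpoth _ _ hj, hpoth _ _ hj]
  have hstepadj' : ∀ k : ℕ, cuAdj u n (p k) (p (k+1)) := by
    intro k
    apply cuAdj_step n u hu1 i
    · rw [hpval, hpval]
      push_cast
      have : x i + ε * k - (x i + ε * (k+1)) = -ε := by ring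
      rw [this, abs_neg, hεabs]
    · intro j hj; rw [hpoth _ _ hj, hpoth _ _ hj]
  -- injectivity of p, hence some p m ∉ X
  have hpinj : Function.Injective p := by
    intro a b hab
    have := congrFun hab i
    rw [hpval, hpval] at this
    have : (a : ℤ) = b := mul_left_cancel₀ hεne (by linarith)
    exact_mod_cast this
  have hexit : ∃ m : ℕ, p m ∉ X := by
    by_contra h
    push_neg at h
    exact (Set.infinite_of_injective_forall_mem hpinj h) hfin
  -- least exit time
  let m := Nat.find hexit
  have hm : p m ∉ X := Nat.find_spec hexit
  have hmpos : 1 ≤ m := by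
    rcases Nat.eq_zero_or_pos m with h | h
    · exfalso; apply hm; rw [h, hp0]; exact hx
    · exact h
  obtain ⟨k, hk⟩ : ∃ k, m = k + 1 := ⟨m - 1, (Nat.succ_pred_eq_of_pos hmpos).symm⟩
  have hmem : ∀ j ≤ k, p j ∈ X := by
    intro j hj
    by_contra h
    exact absurd (Nat.find_min' hexit h) (by omega)
  -- p k is a boundary point
  have hbd : p k ∈ Bd n X := by
    refine ⟨hmem k le_rfl, p (k+1), by rw [← hk]; exact hm, hstepadj 1 le_rfl k⟩
  have hfixk : f (p k) = p k := hfix _ hbd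
  -- inductive bound along the chain
  have hbound : ∀ l : ℕ, l ≤ k → |f (p 0) i - f (p l) i| ≤ l := by
    intro l
    induction l with
    | zero => intro _; simp
    | succ l ih =>
      intro hl
      have ihl := ih (by omega)
      have hstep : |f (p l) i - f (p (l+1)) i| ≤ 1 := by
        rcases hcont (p l) (hmem l (by omega)) (p (l+1)) (hmem (l+1) hl) (hstepadj' l) with h | h
        · rw [h]; simp
        · rcases h with ⟨_, h2, _⟩
          by_cases hc : f (p l) i = f (p (l+1)) i
          · rw [hc]; simp
          · exact le_of_eq (h2 i hc)
      calc |f (p 0) i - f (p (l+1)) i|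
          ≤ |f (p 0) i - f (p l) i| + |f (p l) i - f (p (l+1)) i| := abs_sub_le _ _ _
        _ ≤ l + 1 := by push_cast; linarith
  have hfin2 := hbound k le_rfl
  rw [hfixk, hpval, hp0] at hfin2
  exact ⟨k, hfin2⟩

/-- For finite `X ⊆ ℤⁿ` and `1 ≤ u ≤ n`, `Bd(X)` is a freezing set for
`(X, c_u)`. -/
theorem stmt7 (n u : ℕ) (hu1 : 1 ≤ u) (hun : u ≤ n)
    (X : Set (Fin n → ℤ)) (hfin : X.Finite)
    (f : (Fin n → ℤ) → (Fin n → ℤ))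
    (hmaps : Set.MapsTo f X X)
    (hcont : ∀ x ∈ X, ∀ x' ∈ X, cuAdj u n x x' →
      f x = f x' ∨ cuAdj u n (f x) (f x'))
    (hfix : ∀ x ∈ Bd n X, f x = x) :
    ∀ x ∈ X, f x = x := by
  intro x hx
  funext i
  obtain ⟨k₁, h₁⟩ := walk_bound n u hu1 X hfin f hmaps hcont hfix x hx i 1 (Or.inl rfl)
  obtain ⟨k₂, h₂⟩ := walk_bound n u hu1 X hfin f hmaps hcont hfix x hx i (-1) (Or.inr rfl)
  rw [abs_le] at h₁ h₂
  push_cast at h₁ h₂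
  omega
end

section
/- Let X = [0,m₁]_ℤ × [0,m₂]_ℤ ⊆ ℤ² be a digital rectangle. Then the four corner points A = {0,m₁} × {0,m₂} form a freezing set for (X,c₁): any c₁-continuous self-map f of X fixing all four corners is the identity. -/
/-- `c₁`-adjacency on `ℤ²`: ℓ¹-distance equals 1. -/
def c1Adj (p q : ℤ × ℤ) : Prop := |p.1 - q.1| + |p.2 - q.2| = 1

lemma tri4 (a b c : ℤ × ℤ) :
    |a.1 - c.1| + |a.2 - c.2| ≤ (|a.1 - b.1| + |a.2 - b.2|) + (|b.1 - c.1| + |b.2 - c.2|) := by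
  have h1 := abs_sub_le a.1 b.1 c.1
  have h2 := abs_sub_le a.2 b.2 c.2
  linarith

lemma absStepUp (a b : ℤ) (h : a < b) : |a + 1 - b| = |a - b| - 1 := by
  have h1 : |a + 1 - b| = -(a + 1 - b) := abs_of_nonpos (by omega)
  have h2 : |a - b| = -(a - b) := abs_of_neg (by omega)
  rw [h1, h2]; ring

lemma absStepDown (a b : ℤ) (h : b < a) : |a - 1 - b| = |a - b| - 1 := by
  have h1 : |a - 1 - b| = a - 1 - b := abs_of_nonneg (by omega)
  have h2 : |a - b| = a - b := abs_of_nonneg (by omega)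
  rw [h1, h2]; ring

/-- The four corners of the digital rectangle `[0,m₁]_ℤ × [0,m₂]_ℤ` form a
freezing set for `c₁`. -/
theorem stmt8 (m₁ m₂ : ℤ) (hm₁ : 1 ≤ m₁) (hm₂ : 1 ≤ m₂)
    (X : Set (ℤ × ℤ)) (hX : X = Set.Icc 0 m₁ ×ˢ Set.Icc 0 m₂)
    (A : Set (ℤ × ℤ)) (hA : A = ({0, m₁} : Set ℤ) ×ˢ ({0, m₂} : Set ℤ))
    (f : ℤ × ℤ → ℤ × ℤ) (hmaps : Set.MapsTo f X X)
    (hcont : ∀ x ∈ X, ∀ x' ∈ X, c1Adj x x' → f x = f x' ∨ c1Adj (f x) (f x'))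
    (hfix : ∀ a ∈ A, f a = a) :
    ∀ x ∈ X, f x = x := by
  subst hX hA
  have key : ∀ n : ℕ, ∀ p q : ℤ × ℤ,
      p ∈ (Set.Icc 0 m₁ ×ˢ Set.Icc 0 m₂ : Set (ℤ × ℤ)) →
      q ∈ (Set.Icc 0 m₁ ×ˢ Set.Icc 0 m₂ : Set (ℤ × ℤ)) →
      |p.1 - q.1| + |p.2 - q.2| ≤ (n : ℤ) →
      |(f p).1 - (f q).1| + |(f p).2 - (f q).2| ≤ (n : ℤ) := by
    intro n
    induction n with
    | zero =>
      intro p q hp hq hd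
      push_cast at hd
      have h1 : |p.1 - q.1| = 0 := le_antisymm (by have := abs_nonneg (p.2 - q.2); linarith) (abs_nonneg _)
      have h2 : |p.2 - q.2| = 0 := le_antisymm (by have := abs_nonneg (p.1 - q.1); linarith) (abs_nonneg _)
      have hpq : p = q := by
        apply Prod.ext
        · have := abs_eq_zero.mp h1; linarith
        · have := abs_eq_zero.mp h2; linarith
      rw [hpq]; simp
    | succ n ih =>
      intro p q hp hq hd
      have step : ∀ p' : ℤ × ℤ, p' ∈ (Set.Icc 0 m₁ ×ˢ Set.Icc 0 m₂ : Set (ℤ × ℤ)) →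
          c1Adj p p' → |p'.1 - q.1| + |p'.2 - q.2| ≤ (n : ℤ) →
          |(f p).1 - (f q).1| + |(f p).2 - (f q).2| ≤ ((n + 1 : ℕ) : ℤ) := by
        intro p' hp' hadj hd'
        have h1 : |(f p).1 - (f p').1| + |(f p).2 - (f p').2| ≤ 1 := by
          rcases hcont p hp p' hp' hadj with h | h
          · rw [h]; simp
          · exact le_of_eq h
        have h2 := ih p' q hp' hq hd'
        have h3 := tri4 (f p) (f p') (f q)
        push_cast
        linarith
      have hpm := hp
      have hqm := hq
      simp only [Set.mem_prod, Set.mem_Icc] at hpm hqm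
      rcases lt_trichotomy p.1 q.1 with h1 | h1 | h1
      · refine step (p.1 + 1, p.2) ?_ ?_ ?_
        · simp only [Set.mem_prod, Set.mem_Icc]; omega
        · show |p.1 - (p.1 + 1)| + |p.2 - p.2| = 1
          have : p.1 - (p.1 + 1) = -1 := by ring
          rw [this, sub_self]; simp
        · show |p.1 + 1 - q.1| + |p.2 - q.2| ≤ (n : ℤ)
          rw [absStepUp _ _ h1]
          push_cast at hd
          linarith
      · rcases lt_trichotomy p.2 q.2 with h2 | h2 | h2
        · refine step (p.1, p.2 + 1) ?_ ?_ ?_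
          · simp only [Set.mem_prod, Set.mem_Icc]; omega
          · show |p.1 - p.1| + |p.2 - (p.2 + 1)| = 1
            have : p.2 - (p.2 + 1) = -1 := by ring
            rw [this, sub_self]; simp
          · show |p.1 - q.1| + |p.2 + 1 - q.2| ≤ (n : ℤ)
            rw [absStepUp _ _ h2]
            push_cast at hd
            linarith
        · -- p = q
          have hpq : p = q := Prod.ext h1 h2
          rw [hpq]
          simp only [sub_self, abs_zero, add_zero]
          positivity
        · refine step (p.1, p.2 - 1) ?_ ?_ ?_
          · simp only [Set.mem_prod, Set.mem_Icc]; omega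
          · show |p.1 - p.1| + |p.2 - (p.2 - 1)| = 1
            have : p.2 - (p.2 - 1) = 1 := by ring
            rw [this, sub_self]; simp
          · show |p.1 - q.1| + |p.2 - 1 - q.2| ≤ (n : ℤ)
            rw [absStepDown _ _ h2]
            push_cast at hd
            linarith
      · refine step (p.1 - 1, p.2) ?_ ?_ ?_
        · simp only [Set.mem_prod, Set.mem_Icc]; omega
        · show |p.1 - (p.1 - 1)| + |p.2 - p.2| = 1
          have : p.1 - (p.1 - 1) = 1 := by ring
          rw [this, sub_self]; simp
        · show |p.1 - 1 - q.1| + |p.2 - q.2| ≤ (n : ℤ)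
          rw [absStepDown _ _ h1]
          push_cast at hd
          linarith
  -- now the main argument
  intro x hx
  have hfx := hmaps hx
  -- corner memberships
  have hc00X : ((0, 0) : ℤ × ℤ) ∈ (Set.Icc 0 m₁ ×ˢ Set.Icc 0 m₂ : Set (ℤ × ℤ)) := by
    simp only [Set.mem_prod, Set.mem_Icc]; omega
  have hc10X : ((m₁, 0) : ℤ × ℤ) ∈ (Set.Icc 0 m₁ ×ˢ Set.Icc 0 m₂ : Set (ℤ × ℤ)) := by
    simp only [Set.mem_prod, Set.mem_Icc]; omega
  have hc01X : ((0, m₂) : ℤ × ℤ) ∈ (Set.Icc 0 m₁ ×ˢ Set.Icc 0 m₂ : Set (ℤ × ℤ)) := by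
    simp only [Set.mem_prod, Set.mem_Icc]; omega
  have hc11X : ((m₁, m₂) : ℤ × ℤ) ∈ (Set.Icc 0 m₁ ×ˢ Set.Icc 0 m₂ : Set (ℤ × ℤ)) := by
    simp only [Set.mem_prod, Set.mem_Icc]; omega
  have hf00 : f (0, 0) = (0, 0) := hfix _ (by simp)
  have hf10 : f (m₁, 0) = (m₁, 0) := hfix _ (by simp)
  have hf01 : f (0, m₂) = (0, m₂) := hfix _ (by simp)
  have hf11 : f (m₁, m₂) = (m₁, m₂) := hfix _ (by simp)
  have dist_corner : ∀ c : ℤ × ℤ, c ∈ (Set.Icc 0 m₁ ×ˢ Set.Icc 0 m₂ : Set (ℤ × ℤ)) →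
      f c = c →
      |(f x).1 - c.1| + |(f x).2 - c.2| ≤ |x.1 - c.1| + |x.2 - c.2| := by
    intro c hc hfc
    have hnn : (0 : ℤ) ≤ |x.1 - c.1| + |x.2 - c.2| := by positivity
    have hcast : ((|x.1 - c.1| + |x.2 - c.2|).toNat : ℤ) = |x.1 - c.1| + |x.2 - c.2| :=
      Int.toNat_of_nonneg hnn
    have := key (|x.1 - c.1| + |x.2 - c.2|).toNat x c hx hc (by rw [hcast])
    rw [hfc] at this
    rw [hcast] at this
    exact this
  have d00 := dist_corner _ hc00X hf00
  have d10 := dist_corner _ hc10X hf10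
  have d01 := dist_corner _ hc01X hf01
  have d11 := dist_corner _ hc11X hf11
  simp only [Set.mem_prod, Set.mem_Icc] at hx hfx
  obtain ⟨⟨hx1, hx2⟩, hx3, hx4⟩ := hx
  obtain ⟨⟨hf1, hf2⟩, hf3, hf4⟩ := hfx
  -- rewrite all absolute values
  have e1 : ∀ t : ℤ, 0 ≤ t → |t - 0| = t := fun t ht => by rw [sub_zero, abs_of_nonneg ht]
  have e2 : ∀ t m : ℤ, t ≤ m → |t - m| = m - t := fun t m ht => by
    rw [abs_of_nonpos (by omega)]; ring
  simp only at d00 d10 d01 d11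
  rw [e1 _ hf1, e1 _ hf3, e1 _ hx1, e1 _ hx3] at d00
  rw [e2 _ _ hf2, e1 _ hf3, e2 _ _ hx2, e1 _ hx3] at d10
  rw [e1 _ hf1, e2 _ _ hf4, e1 _ hx1, e2 _ _ hx4] at d01
  rw [e2 _ _ hf2, e2 _ _ hf4, e2 _ _ hx2, e2 _ _ hx4] at d11
  have hfx1 : (f x).1 = x.1 := by linarith
  have hfx2 : (f x).2 = x.2 := by linarith
  exact Prod.ext hfx1 hfx2
end

section
/- Let X = [0,m₁]_ℤ × [0,m₂]_ℤ with m₁, m₂ ≥ 2. Then the corner set A = {0,m₁} × {0,m₂} is a minimal freezing set for (X,c₁): A is a freezing set, and for each corner p ∈ A, the set A \ {p} is not a freezing set, i.e., there exists a c₁-continuous self-map f of X with A \ {p} ⊆ Fix(f) and f ≠ id. -/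
lemma absf (a : ℤ) : 0 ≤ |a| ∧ (|a| = a ∨ |a| = -a) := ⟨abs_nonneg a, abs_choice a⟩

lemma c1_iff (p q : ℤ × ℤ) : c1Adj p q ↔
    ((p.1 = q.1 ∧ (p.2 = q.2 + 1 ∨ p.2 + 1 = q.2)) ∨
     (p.2 = q.2 ∧ (p.1 = q.1 + 1 ∨ p.1 + 1 = q.1))) := by
  unfold c1Adj
  have h1 := absf (p.1 - q.1)
  have h2 := absf (p.2 - q.2)
  omega

lemma step_lemma (m₁ m₂ : ℤ) (x y : ℤ × ℤ)
    (hx : x ∈ Set.Icc (0:ℤ) m₁ ×ˢ Set.Icc (0:ℤ) m₂)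
    (hy : y ∈ Set.Icc (0:ℤ) m₁ ×ˢ Set.Icc (0:ℤ) m₂)
    (hne : x ≠ y) :
    ∃ z ∈ Set.Icc (0:ℤ) m₁ ×ˢ Set.Icc (0:ℤ) m₂, c1Adj x z ∧
      |z.1 - y.1| + |z.2 - y.2| + 1 = |x.1 - y.1| + |x.2 - y.2| := by
  simp only [Set.mem_prod, Set.mem_Icc] at hx hy
  have hxy : x.1 ≠ y.1 ∨ x.2 ≠ y.2 := by
    by_contra h
    push_neg at h
    exact hne (Prod.ext h.1 h.2)
  rcases lt_trichotomy x.1 y.1 with h | h | h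
  · refine ⟨(x.1 + 1, x.2), ?_, ?_, ?_⟩
    · simp only [Set.mem_prod, Set.mem_Icc]; omega
    · rw [c1_iff]; simp
    · have h1 := absf (x.1 + 1 - y.1)
      have h2 := absf (x.1 - y.1)
      simp only []
      omega
  · rcases lt_trichotomy x.2 y.2 with h2 | h2 | h2
    · refine ⟨(x.1, x.2 + 1), ?_, ?_, ?_⟩
      · simp only [Set.mem_prod, Set.mem_Icc]; omega
      · rw [c1_iff]; simp
      · have h1 := absf (x.2 + 1 - y.2)
        have h3 := absf (x.2 - y.2)
        simp only []
        omega
    · omega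
    · refine ⟨(x.1, x.2 - 1), ?_, ?_, ?_⟩
      · simp only [Set.mem_prod, Set.mem_Icc]; omega
      · rw [c1_iff]; simp
      · have h1 := absf (x.2 - 1 - y.2)
        have h3 := absf (x.2 - y.2)
        simp only []
        omega
  · refine ⟨(x.1 - 1, x.2), ?_, ?_, ?_⟩
    · simp only [Set.mem_prod, Set.mem_Icc]; omega
    · rw [c1_iff]; simp
    · have h1 := absf (x.1 - 1 - y.1)
      have h2 := absf (x.1 - y.1)
      simp only []
      omega

lemma lip_lemma (m₁ m₂ : ℤ) (f : ℤ × ℤ → ℤ × ℤ)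
    (hmap : Set.MapsTo f (Set.Icc (0:ℤ) m₁ ×ˢ Set.Icc (0:ℤ) m₂)
      (Set.Icc (0:ℤ) m₁ ×ˢ Set.Icc (0:ℤ) m₂))
    (hcont : ∀ x ∈ Set.Icc (0:ℤ) m₁ ×ˢ Set.Icc (0:ℤ) m₂,
      ∀ x' ∈ Set.Icc (0:ℤ) m₁ ×ˢ Set.Icc (0:ℤ) m₂,
      c1Adj x x' → f x = f x' ∨ c1Adj (f x) (f x')) :
    ∀ n : ℕ, ∀ x ∈ Set.Icc (0:ℤ) m₁ ×ˢ Set.Icc (0:ℤ) m₂,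
      ∀ y ∈ Set.Icc (0:ℤ) m₁ ×ˢ Set.Icc (0:ℤ) m₂,
      |x.1 - y.1| + |x.2 - y.2| ≤ (n : ℤ) →
      |(f x).1 - (f y).1| + |(f x).2 - (f y).2| ≤ (n : ℤ) := by
  intro n
  induction n with
  | zero =>
    intro x hx y hy h
    have h1 := absf (x.1 - y.1)
    have h2 := absf (x.2 - y.2)
    have hxy : x = y := Prod.ext (by omega) (by omega)
    subst hxy
    have h3 := absf ((f x).1 - (f x).1)
    have h4 := absf ((f x).2 - (f x).2)
    omega
  | succ n ih =>
    intro x hx y hy h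
    by_cases hle : |x.1 - y.1| + |x.2 - y.2| ≤ (n : ℤ)
    · have := ih x hx y hy hle
      push_cast
      push_cast at this
      omega
    · have hne : x ≠ y := by
        intro he; subst he
        have h1 := absf (x.1 - x.1)
        have h2 := absf (x.2 - x.2)
        omega
      obtain ⟨z, hz, hadj, hd⟩ := step_lemma m₁ m₂ x y hx hy hne
      have hzy : |z.1 - y.1| + |z.2 - y.2| ≤ (n : ℤ) := by push_cast at h ⊢; omega
      have h2 := ih z hz y hy hzy
      have h3 : |(f x).1 - (f z).1| + |(f x).2 - (f z).2| ≤ 1 := by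
        rcases hcont x hx z hz hadj with he | ha
        · rw [he]
          have h4 := absf ((f z).1 - (f z).1)
          have h5 := absf ((f z).2 - (f z).2)
          omega
        · unfold c1Adj at ha; omega
      have t1 : |(f x).1 - (f y).1| ≤ |(f x).1 - (f z).1| + |(f z).1 - (f y).1| :=
        abs_sub_le _ _ _
      have t2 : |(f x).2 - (f y).2| ≤ |(f x).2 - (f z).2| + |(f z).2 - (f y).2| :=
        abs_sub_le _ _ _
      have ha1 := absf ((f x).1 - (f y).1)
      have ha2 := absf ((f x).2 - (f y).2)
      push_cast at h2 ⊢
      omega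

/-- For `m₁, m₂ ≥ 2` the corner set of `[0,m₁]_ℤ × [0,m₂]_ℤ` is a minimal
freezing set for `c₁`: it is a freezing set, and removing any corner yields
a set that is not a freezing set. -/
theorem stmt9 (m₁ m₂ : ℤ) (hm₁ : 2 ≤ m₁) (hm₂ : 2 ≤ m₂)
    (X : Set (ℤ × ℤ)) (hX : X = Set.Icc 0 m₁ ×ˢ Set.Icc 0 m₂)
    (A : Set (ℤ × ℤ)) (hA : A = ({0, m₁} : Set ℤ) ×ˢ ({0, m₂} : Set ℤ)) :
    (∀ f : ℤ × ℤ → ℤ × ℤ, Set.MapsTo f X X →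
      (∀ x ∈ X, ∀ x' ∈ X, c1Adj x x' → f x = f x' ∨ c1Adj (f x) (f x')) →
      (∀ a ∈ A, f a = a) → ∀ x ∈ X, f x = x) ∧
    (∀ p ∈ A, ∃ f : ℤ × ℤ → ℤ × ℤ, Set.MapsTo f X X ∧
      (∀ x ∈ X, ∀ x' ∈ X, c1Adj x x' → f x = f x' ∨ c1Adj (f x) (f x')) ∧
      (∀ a ∈ A \ {p}, f a = a) ∧ ∃ x ∈ X, f x ≠ x) := by
  subst hX hA
  constructor
  · -- freezing
    intro f hmap hcont hfix x hx
    have lip := lip_lemma m₁ m₂ f hmap hcont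
    -- corners
    have hc00 : ((0,0) : ℤ×ℤ) ∈ ({0, m₁} : Set ℤ) ×ˢ ({0, m₂} : Set ℤ) := by simp
    have hc10 : ((m₁,0) : ℤ×ℤ) ∈ ({0, m₁} : Set ℤ) ×ˢ ({0, m₂} : Set ℤ) := by simp
    have hc01 : ((0,m₂) : ℤ×ℤ) ∈ ({0, m₁} : Set ℤ) ×ˢ ({0, m₂} : Set ℤ) := by simp
    have hc11 : ((m₁,m₂) : ℤ×ℤ) ∈ ({0, m₁} : Set ℤ) ×ˢ ({0, m₂} : Set ℤ) := by simp
    have hin : ∀ a b : ℤ, a ∈ ({0, m₁} : Set ℤ) → b ∈ ({0, m₂} : Set ℤ) →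
        ((a,b) : ℤ×ℤ) ∈ Set.Icc (0:ℤ) m₁ ×ˢ Set.Icc (0:ℤ) m₂ := by
      intro a b ha hb
      simp only [Set.mem_insert_iff, Set.mem_singleton_iff] at ha hb
      simp only [Set.mem_prod, Set.mem_Icc]
      constructor <;> constructor <;> omega
    have hx00 : ((0,0) : ℤ×ℤ) ∈ Set.Icc (0:ℤ) m₁ ×ˢ Set.Icc (0:ℤ) m₂ :=
      hin 0 0 (by simp) (by simp)
    have hx10 : ((m₁,0) : ℤ×ℤ) ∈ Set.Icc (0:ℤ) m₁ ×ˢ Set.Icc (0:ℤ) m₂ :=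
      hin m₁ 0 (by simp) (by simp)
    have hx01 : ((0,m₂) : ℤ×ℤ) ∈ Set.Icc (0:ℤ) m₁ ×ˢ Set.Icc (0:ℤ) m₂ :=
      hin 0 m₂ (by simp) (by simp)
    have hx11 : ((m₁,m₂) : ℤ×ℤ) ∈ Set.Icc (0:ℤ) m₁ ×ˢ Set.Icc (0:ℤ) m₂ :=
      hin m₁ m₂ (by simp) (by simp)
    have key : ∀ c ∈ Set.Icc (0:ℤ) m₁ ×ˢ Set.Icc (0:ℤ) m₂, f c = c →
        |(f x).1 - c.1| + |(f x).2 - c.2| ≤ |x.1 - c.1| + |x.2 - c.2| := by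
      intro c hc hfc
      have hd0 : (0:ℤ) ≤ |x.1 - c.1| + |x.2 - c.2| := by
        have := absf (x.1 - c.1); have := absf (x.2 - c.2); omega
      have hcast : ((|x.1 - c.1| + |x.2 - c.2|).toNat : ℤ) = |x.1 - c.1| + |x.2 - c.2| :=
        Int.toNat_of_nonneg hd0
      have := lip (|x.1 - c.1| + |x.2 - c.2|).toNat x hx c hc (by rw [hcast])
      rw [hfc, hcast] at this
      exact this
    have k00 := key _ hx00 (hfix _ hc00)
    have k10 := key _ hx10 (hfix _ hc10)
    have k01 := key _ hx01 (hfix _ hc01)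
    have k11 := key _ hx11 (hfix _ hc11)
    have hfxX := hmap hx
    simp only [Set.mem_prod, Set.mem_Icc] at hx hfxX
    simp only [] at k00 k10 k01 k11
    have a1 := absf ((f x).1 - 0); have a2 := absf ((f x).2 - 0)
    have a3 := absf ((f x).1 - m₁); have a4 := absf ((f x).2 - m₂)
    have a5 := absf (x.1 - 0); have a6 := absf (x.2 - 0)
    have a7 := absf (x.1 - m₁); have a8 := absf (x.2 - m₂)
    exact Prod.ext (by omega) (by omega)
  · -- not minimal after removing a corner
    intro p hp
    simp only [Set.mem_prod, Set.mem_insert_iff, Set.mem_singleton_iff] at hp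
    set q : ℤ × ℤ := (if p.1 = 0 then 1 else m₁ - 1, if p.2 = 0 then 1 else m₂ - 1) with hq
    refine ⟨fun x => if x = p then q else x, ?_, ?_, ?_, ?_⟩
    · intro x hxX
      by_cases hxp : x = p
      · simp only [hxp, if_pos rfl, hq]
        simp only [Set.mem_prod, Set.mem_Icc]
        constructor <;> split <;> omega
      · simpa [if_neg hxp] using hxX
    · intro x hxX x' hxX' hadj
      by_cases h1 : x = p <;> by_cases h2 : x' = p
      · left; simp [h1, h2]
      · -- x = p, x' ≠ p : show q adj x' (or equal)
        by_cases hqx : q = x'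
        · left; simp [h1, if_neg h2, hqx]
        · right
          simp only [h1, if_pos rfl, if_neg h2, if_true]
          subst h1
          rw [c1_iff] at hadj ⊢
          simp only [Set.mem_prod, Set.mem_Icc] at hxX'
          have hq1 : q.1 = if x.1 = 0 then (1:ℤ) else m₁ - 1 := rfl
          have hq2 : q.2 = if x.2 = 0 then (1:ℤ) else m₂ - 1 := rfl
          rw [hq1, hq2]
          split_ifs <;> omega
      · right
        simp only [h2, if_pos rfl, if_neg h1, if_true]
        subst h2
        rw [c1_iff] at hadj ⊢
        simp only [Set.mem_prod, Set.mem_Icc] at hxX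
        have hq1 : q.1 = if x'.1 = 0 then (1:ℤ) else m₁ - 1 := rfl
        have hq2 : q.2 = if x'.2 = 0 then (1:ℤ) else m₂ - 1 := rfl
        rw [hq1, hq2]
        split_ifs <;> omega
      · right
        simp only [if_neg h1, if_neg h2]
        exact hadj
    · intro a ha
      simp only [Set.mem_diff, Set.mem_singleton_iff] at ha
      simp [ha.2]
    · refine ⟨p, ?_, ?_⟩
      · simp only [Set.mem_prod, Set.mem_Icc]
        rcases hp with ⟨hp1 | hp1, hp2 | hp2⟩ <;> constructor <;> constructor <;> omega
      · simp only [if_pos rfl, if_true]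
        intro he
        have h1 := congrArg Prod.fst he
        have hq1 : q.1 = if p.1 = 0 then (1:ℤ) else m₁ - 1 := rfl
        rw [hq1] at h1
        rcases hp with ⟨hp1 | hp1, _⟩ <;> split at h1 <;> omega
end

section
/- Let D = ([0,3]_ℤ × [0,6]_ℤ) \ {(3,3)} and A = {(0,0), (3,0), (3,2), (3,4), (3,6), (0,6)}. For each p ∈ A, there exists a c₁-continuous self-map f_p of D with Fix(f_p) = D \ {p}; hence A \ {p} is not a freezing set for (D,c₁). -/
lemma c1Adj_symm {p q : ℤ × ℤ} (h : c1Adj p q) : c1Adj q p := by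
  unfold c1Adj at *
  rw [abs_sub_comm q.1, abs_sub_comm q.2]
  exact h

lemma c1Adj_cases {p q : ℤ × ℤ} (h : c1Adj p q) :
    q = (p.1 + 1, p.2) ∨ q = (p.1 - 1, p.2) ∨ q = (p.1, p.2 + 1) ∨ q = (p.1, p.2 - 1) := by
  unfold c1Adj at h
  rw [Int.abs_eq_natAbs, Int.abs_eq_natAbs] at h
  rcases q with ⟨a, b⟩; rcases p with ⟨c, d⟩
  simp only [Prod.mk.injEq]
  omega

lemma build (D : Set (ℤ × ℤ)) (p t : ℤ × ℤ) (hp : p ∈ D) (ht : t ∈ D) (htp : t ≠ p)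
    (hadj : ∀ x' ∈ D, c1Adj p x' → t = x' ∨ c1Adj t x') :
    ∃ f : ℤ × ℤ → ℤ × ℤ, Set.MapsTo f D D ∧
      (∀ x ∈ D, ∀ x' ∈ D, c1Adj x x' → f x = f x' ∨ c1Adj (f x) (f x')) ∧
      (∀ x ∈ D, (f x = x ↔ x ≠ p)) := by
  refine ⟨fun x => if x = p then t else x, ?_, ?_, ?_⟩
  · intro x hx
    by_cases h : x = p <;> simp [h, ht, hx]
  · intro x hx x' hx' h
    by_cases h1 : x = p <;> by_cases h2 : x' = p
    · subst h1; subst h2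
      simp [c1Adj] at h
    · subst h1
      simp only [if_pos rfl, if_neg h2]
      rcases hadj x' hx' h with h3 | h3
      · exact Or.inl h3
      · exact Or.inr h3
    · subst h2
      simp only [if_pos rfl, if_neg h1]
      rcases hadj x hx (c1Adj_symm h) with h3 | h3
      · exact Or.inl h3.symm
      · exact Or.inr (c1Adj_symm h3)
    · simp only [if_neg h1, if_neg h2]
      exact Or.inr h
  · intro x hx
    by_cases h : x = p
    · subst h
      simp [htp]
    · simp [h]

/-- For each `p` in `A = {(0,0),(3,0),(3,2),(3,4),(3,6),(0,6)}` there is a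
`c₁`-continuous self-map `f_p` of `D = ([0,3]_ℤ × [0,6]_ℤ) \ {(3,3)}` whose
fixed point set is exactly `D \ {p}`. -/
theorem stmt11
    (D : Set (ℤ × ℤ)) (hD : D = (Set.Icc 0 3 ×ˢ Set.Icc 0 6) \ {((3 : ℤ), (3 : ℤ))})
    (A : Set (ℤ × ℤ))
    (hA : A = {((0 : ℤ), (0 : ℤ)), (3, 0), (3, 2), (3, 4), (3, 6), (0, 6)}) :
    ∀ p ∈ A, ∃ f : ℤ × ℤ → ℤ × ℤ, Set.MapsTo f D D ∧
      (∀ x ∈ D, ∀ x' ∈ D, c1Adj x x' → f x = f x' ∨ c1Adj (f x) (f x')) ∧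
      (∀ x ∈ D, (f x = x ↔ x ≠ p)) := by
  subst hD hA
  intro p hp
  simp only [Set.mem_insert_iff, Set.mem_singleton_iff] at hp
  have memD : ∀ q : ℤ × ℤ,
      q ∈ (Set.Icc (0:ℤ) 3 ×ˢ Set.Icc (0:ℤ) 6) \ {((3 : ℤ), (3 : ℤ))} ↔
      (0 ≤ q.1 ∧ q.1 ≤ 3 ∧ 0 ≤ q.2 ∧ q.2 ≤ 6 ∧ ¬(q.1 = 3 ∧ q.2 = 3)) := by
    rintro ⟨a, b⟩
    simp only [Set.mem_diff, Set.mem_prod, Set.mem_Icc, Set.mem_singleton_iff, Prod.mk.injEq]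
    tauto
  rcases hp with h | h | h | h | h | h <;> subst h
  · refine build _ _ (1, 1) (by rw [memD]; norm_num) (by rw [memD]; norm_num)
      (by decide) ?_
    intro x' hx' hadj
    rw [memD] at hx'
    rcases c1Adj_cases hadj with h | h | h | h <;> subst h <;>
      first
        | (exact Or.inr (by unfold c1Adj; decide))
        | (exfalso; simp at hx')
  · refine build _ _ (2, 1) (by rw [memD]; norm_num) (by rw [memD]; norm_num)
      (by decide) ?_
    intro x' hx' hadj
    rw [memD] at hx'
    rcases c1Adj_cases hadj with h | h | h | h <;> subst h <;>
      first
        | (exact Or.inr (by unfold c1Adj; decide))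
        | (exfalso; simp at hx')
  · refine build _ _ (2, 1) (by rw [memD]; norm_num) (by rw [memD]; norm_num)
      (by decide) ?_
    intro x' hx' hadj
    rw [memD] at hx'
    rcases c1Adj_cases hadj with h | h | h | h <;> subst h <;>
      first
        | (exact Or.inr (by unfold c1Adj; decide))
        | (exfalso; simp at hx')
  · refine build _ _ (2, 5) (by rw [memD]; norm_num) (by rw [memD]; norm_num)
      (by decide) ?_
    intro x' hx' hadj
    rw [memD] at hx'
    rcases c1Adj_cases hadj with h | h | h | h <;> subst h <;>
      first
        | (exact Or.inr (by unfold c1Adj; decide))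
        | (exfalso; simp at hx')
  · refine build _ _ (2, 5) (by rw [memD]; norm_num) (by rw [memD]; norm_num)
      (by decide) ?_
    intro x' hx' hadj
    rw [memD] at hx'
    rcases c1Adj_cases hadj with h | h | h | h <;> subst h <;>
      first
        | (exact Or.inr (by unfold c1Adj; decide))
        | (exfalso; simp at hx')
  · refine build _ _ (1, 5) (by rw [memD]; norm_num) (by rw [memD]; norm_num)
      (by decide) ?_
    intro x' hx' hadj
    rw [memD] at hx'
    rcases c1Adj_cases hadj with h | h | h | h <;> subst h <;>
      first
        | (exact Or.inr (by unfold c1Adj; decide))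
        | (exfalso; simp at hx')
end

section
/- Let X = [0,m₁]_ℤ × [0,m₂]_ℤ with m₁, m₂ ≥ 1, and let f be a c₁-continuous self-map of X that fixes all four points (0,0), (m₁,0), (0,m₂), (m₁,m₂). Then f fixes every point of the topological boundary of X, i.e., every point (x,y) with x ∈ {0,m₁} or y ∈ {0,m₂}. -/
lemma edge_lemma (n : ℤ) (g : ℤ → ℤ × ℤ)
    (h0 : g 0 = (0, 0)) (hn : g n = (n, 0))
    (hstep : ∀ k, 0 ≤ k → k < n → g k = g (k+1) ∨ c1Adj (g k) (g (k+1))) :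
    ∀ k, 0 ≤ k → k ≤ n → g k = (k, 0) := by
  have hle : ∀ k, 0 ≤ k → k < n →
      (g (k+1)).1 ≤ (g k).1 + 1 ∧ (g k).1 ≤ (g (k+1)).1 + 1 := by
    intro k hk hkn
    rcases hstep k hk hkn with h | h
    · rw [h]; omega
    · unfold c1Adj at h
      have h2 := abs_nonneg ((g k).2 - (g (k+1)).2)
      have h1 : |(g k).1 - (g (k+1)).1| ≤ 1 := by omega
      have := abs_le.mp h1
      omega
  have up : ∀ k, 0 ≤ k → k ≤ n → (g k).1 ≤ k := by
    refine fun k hk => Int.le_induction (motive := fun k _ => k ≤ n → (g k).1 ≤ k) ?_ ?_ k hk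
    · intro _; rw [h0]
    · intro k hk ih hkn
      have hlt : k < n := by omega
      have hb1 := hle k hk hlt
      have hb2 := ih (by omega)
      omega
  have down : ∀ k, k ≤ n → 0 ≤ k → k ≤ (g k).1 := by
    refine fun k hk => Int.le_induction_down (motive := fun k _ => 0 ≤ k → k ≤ (g k).1) ?_ ?_ k hk
    · intro _; rw [hn]
    · intro k hk ih hk0
      have hlt : k - 1 < n := by omega
      have hb := hle (k-1) hk0 hlt
      rw [show k - 1 + 1 = k from by ring] at hb
      have := ih (by omega)
      omega
  have ha : ∀ k, 0 ≤ k → k ≤ n → (g k).1 = k := fun k hk hkn =>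
    le_antisymm (up k hk hkn) (down k hkn hk)
  have hb : ∀ k, 0 ≤ k → k ≤ n → (g k).2 = 0 := by
    refine fun k hk => Int.le_induction (motive := fun k _ => k ≤ n → (g k).2 = 0) ?_ ?_ k hk
    · intro _; rw [h0]
    · intro k hk ih hkn
      have hlt : k < n := by omega
      have ih' := ih (by omega)
      have ha1 := ha k hk (by omega)
      have ha2 := ha (k+1) (by omega) hkn
      rcases hstep k hk hlt with h | h
      · rw [← h]; exact ih'
      · unfold c1Adj at h
        rw [ha1, ha2, ih'] at h
        have h1 : |k - (k+1)| = 1 := by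
          rw [show k - (k+1) = -1 from by ring]; simp
        have h2 : |(0:ℤ) - (g (k+1)).2| = 0 := by omega
        have := abs_eq_zero.mp h2
        omega
  intro k hk hkn
  exact Prod.ext (ha k hk hkn) (hb k hk hkn)

/-- A `c₁`-continuous self-map of `[0,m₁]_ℤ × [0,m₂]_ℤ` fixing the four
corners fixes every point of the topological boundary of the rectangle. -/
theorem stmt14 (m₁ m₂ : ℤ) (hm₁ : 1 ≤ m₁) (hm₂ : 1 ≤ m₂)
    (X : Set (ℤ × ℤ)) (hX : X = Set.Icc 0 m₁ ×ˢ Set.Icc 0 m₂)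
    (f : ℤ × ℤ → ℤ × ℤ) (hmaps : Set.MapsTo f X X)
    (hcont : ∀ x ∈ X, ∀ x' ∈ X, c1Adj x x' → f x = f x' ∨ c1Adj (f x) (f x'))
    (h00 : f (0, 0) = (0, 0)) (h10 : f (m₁, 0) = (m₁, 0))
    (h01 : f (0, m₂) = (0, m₂)) (h11 : f (m₁, m₂) = (m₁, m₂)) :
    ∀ p ∈ X, (p.1 = 0 ∨ p.1 = m₁ ∨ p.2 = 0 ∨ p.2 = m₂) → f p = p := by
  subst hX
  have hmem : ∀ a b : ℤ, 0 ≤ a → a ≤ m₁ → 0 ≤ b → b ≤ m₂ →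
      (a, b) ∈ Set.Icc (0:ℤ) m₁ ×ˢ Set.Icc (0:ℤ) m₂ := by
    intro a b h1 h2 h3 h4
    simp only [Set.mem_prod, Set.mem_Icc]
    exact ⟨⟨h1, h2⟩, h3, h4⟩
  have hadjH : ∀ a b : ℤ, c1Adj (a, b) (a + 1, b) := by
    intro a b
    unfold c1Adj
    simp [show a - (a+1) = -1 from by ring]
  have hadjV : ∀ a b : ℤ, c1Adj (a, b) (a, b + 1) := by
    intro a b
    unfold c1Adj
    simp [show b - (b+1) = -1 from by ring]
  -- bottom edge
  have hbot : ∀ k, 0 ≤ k → k ≤ m₁ → f (k, 0) = (k, 0) := by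
    apply edge_lemma m₁ (fun k => f (k, 0)) h00 h10
    intro k hk hkn
    exact hcont (k, 0) (hmem k 0 hk (by omega) le_rfl (by omega)) (k+1, 0)
      (hmem (k+1) 0 (by omega) (by omega) le_rfl (by omega)) (hadjH k 0)
  -- top edge
  have htop : ∀ k, 0 ≤ k → k ≤ m₁ → f (k, m₂) = (k, m₂) := by
    have h := edge_lemma m₁ (fun k => ((f (k, m₂)).1, (f (k, m₂)).2 - m₂))
      (by show ((f (0, m₂)).1, (f (0, m₂)).2 - m₂) = ((0:ℤ), (0:ℤ)); rw [h01]; simp)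
      (by show ((f (m₁, m₂)).1, (f (m₁, m₂)).2 - m₂) = (m₁, (0:ℤ)); rw [h11]; simp) ?_
    · intro k hk hkn
      have := h k hk hkn
      simp only [Prod.mk.injEq] at this
      exact Prod.ext this.1 (by omega)
    · intro k hk hkn
      have hc := hcont (k, m₂) (hmem k m₂ hk (by omega) (by omega) le_rfl) (k+1, m₂)
        (hmem (k+1) m₂ (by omega) (by omega) (by omega) le_rfl) (hadjH k m₂)
      rcases hc with h | h
      · left; simp [h]
      · right; unfold c1Adj at h ⊢
        simp only
        convert h using 2
        ring
  -- left edge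
  have hleft : ∀ k, 0 ≤ k → k ≤ m₂ → f (0, k) = (0, k) := by
    have h := edge_lemma m₂ (fun k => ((f (0, k)).2, (f (0, k)).1))
      (by show ((f (0, 0)).2, (f (0, 0)).1) = ((0:ℤ), (0:ℤ)); rw [h00])
      (by show ((f (0, m₂)).2, (f (0, m₂)).1) = (m₂, (0:ℤ)); rw [h01]) ?_
    · intro k hk hkn
      have := h k hk hkn
      simp only [Prod.mk.injEq] at this
      exact Prod.ext this.2 this.1
    · intro k hk hkn
      have hc := hcont (0, k) (hmem 0 k le_rfl (by omega) hk (by omega)) (0, k+1)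
        (hmem 0 (k+1) le_rfl (by omega) (by omega) (by omega)) (hadjV 0 k)
      rcases hc with h | h
      · left; simp [h]
      · right; unfold c1Adj at h ⊢
        simp only
        omega
  -- right edge
  have hright : ∀ k, 0 ≤ k → k ≤ m₂ → f (m₁, k) = (m₁, k) := by
    have h := edge_lemma m₂ (fun k => ((f (m₁, k)).2, (f (m₁, k)).1 - m₁))
      (by show ((f (m₁, 0)).2, (f (m₁, 0)).1 - m₁) = ((0:ℤ), (0:ℤ)); rw [h10]; simp)
      (by show ((f (m₁, m₂)).2, (f (m₁, m₂)).1 - m₁) = (m₂, (0:ℤ)); rw [h11]; simp) ?_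
    · intro k hk hkn
      have := h k hk hkn
      simp only [Prod.mk.injEq] at this
      exact Prod.ext (by omega) this.1
    · intro k hk hkn
      have hc := hcont (m₁, k) (hmem m₁ k (by omega) le_rfl hk (by omega)) (m₁, k+1)
        (hmem m₁ (k+1) (by omega) le_rfl (by omega) (by omega)) (hadjV m₁ k)
      rcases hc with h | h
      · left; simp [h]
      · right; unfold c1Adj at h ⊢
        simp only
        have e : ∀ x y : ℤ, |x - m₁ - (y - m₁)| = |x - y| := by
          intro x y; congr 1; ring
        rw [e]
        omega
  intro p hp hcases
  obtain ⟨x, y⟩ := p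
  simp only [Set.mem_prod, Set.mem_Icc] at hp
  obtain ⟨⟨hx0, hx1⟩, hy0, hy1⟩ := hp
  rcases hcases with h | h | h | h
  · subst h; exact hleft y hy0 hy1
  · subst h; exact hright y hy0 hy1
  · subst h; exact hbot x hx0 hx1
  · subst h; exact htop x hx0 hx1
end

section
/- Let X ⊆ ℤ² be finite, let f be a c_u-continuous self-map of X (u ∈ {1,2}), and suppose x ∈ X with f(x) ≠ x. Suppose x lies on a horizontal segment ab ⊆ X with a = (a₁,y), b = (b₁,y), a₁ ≤ x₁ ≤ b₁, and on a vertical segment cd ⊆ X with c = (x₁,c₂), d = (x₁,d₂), c₂ ≤ x₂ ≤ d₂ (all lattice segments contained in X). If f fixes a, b, c, and d, then a contradiction follows; i.e., f must fix x. -/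
/-- `c₂`-adjacency on `ℤ²`: the points are distinct and their ℓ∞-distance
equals 1. -/
def c2Adj (p q : ℤ × ℤ) : Prop := p ≠ q ∧ max |p.1 - q.1| |p.2 - q.2| = 1

lemma adj_coord (adj : ℤ × ℤ → ℤ × ℤ → Prop) (hadj : adj = c1Adj ∨ adj = c2Adj)
    {p q : ℤ × ℤ} (h : adj p q) : |p.1 - q.1| ≤ 1 ∧ |p.2 - q.2| ≤ 1 := by
  rcases hadj with rfl | rfl
  · unfold c1Adj at h
    constructor <;> [nlinarith [abs_nonneg (p.2 - q.2)]; nlinarith [abs_nonneg (p.1 - q.1)]]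
  · obtain ⟨-, h⟩ := h
    constructor
    · calc |p.1 - q.1| ≤ max |p.1 - q.1| |p.2 - q.2| := le_max_left _ _
        _ = 1 := h
    · calc |p.2 - q.2| ≤ max |p.1 - q.1| |p.2 - q.2| := le_max_right _ _
        _ = 1 := h

lemma adj_step_h (adj : ℤ × ℤ → ℤ × ℤ → Prop) (hadj : adj = c1Adj ∨ adj = c2Adj)
    (t y : ℤ) : adj (t - 1, y) (t, y) := by
  rcases hadj with rfl | rfl
  · show |t - 1 - t| + |y - y| = 1; simp
  · constructor
    · intro h
      have h2 := congrArg Prod.fst h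
      simp only [Prod.fst] at h2
      omega
    · show max |t - 1 - t| |y - y| = 1; simp

lemma adj_step_v (adj : ℤ × ℤ → ℤ × ℤ → Prop) (hadj : adj = c1Adj ∨ adj = c2Adj)
    (x t : ℤ) : adj (x, t - 1) (x, t) := by
  rcases hadj with rfl | rfl
  · show |x - x| + |t - 1 - t| = 1; simp
  · constructor
    · intro h
      have h2 := congrArg Prod.snd h
      simp only [Prod.snd] at h2
      omega
    · show max |x - x| |t - 1 - t| = 1; simp

/-- Downward pulling: if consecutive values differ by at most one and
`h e > e`, then `h s > s` for `s ≤ e`. -/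
lemma pull_down (h : ℤ → ℤ) (s e : ℤ) (hse : s ≤ e)
    (hstep : ∀ t, s < t → t ≤ e → |h (t - 1) - h t| ≤ 1)
    (hend : h e > e) : h s > s := by
  have key : ∀ n : ℕ, s ≤ e - n → h (e - n) > e - n := by
    intro n
    induction n with
    | zero => intro _; simpa using hend
    | succ k ih =>
      intro hn
      have hk : s ≤ e - k := by push_cast at hn ⊢; omega
      have hik := ih hk
      have hs := hstep (e - k) (by push_cast at hn; omega) (by omega)
      have : (e : ℤ) - (k + 1 : ℕ) = (e - k) - 1 := by push_cast; ring
      rw [this]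
      have := abs_le.mp hs
      omega
  have := key (e - s).toNat (by omega)
  have he : (e : ℤ) - (e - s).toNat = s := by omega
  rwa [he] at this

lemma pull_up (h : ℤ → ℤ) (s e : ℤ) (hse : s ≤ e)
    (hstep : ∀ t, s < t → t ≤ e → |h (t - 1) - h t| ≤ 1)
    (hstart : h s < s) : h e < e := by
  have key := pull_down (fun t => -(h (-t))) (-e) (-s) (by omega)
    (fun t ht1 ht2 => by
      have hs := hstep (-t + 1) (by omega) (by omega)
      have e2 : (-t + 1 - 1 : ℤ) = -t := by ring
      rw [e2] at hs
      show |-(h (-(t - 1))) - -(h (-t))| ≤ 1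
      have e1 : -(t - 1) = -t + 1 := by ring
      rw [e1]
      have e3 : -h (-t + 1) - -h (-t) = -(h (-t + 1) - h (-t)) := by ring
      rw [e3, abs_neg, abs_sub_comm]
      exact hs)
    (by simp only [neg_neg]; omega)
  simp only [neg_neg] at key
  omega

/-- If `x` lies on a horizontal lattice segment `ab ⊆ X` and a vertical
lattice segment `cd ⊆ X`, and a `c_u`-continuous self-map `f` (u ∈ {1,2})
fixes `a, b, c, d` but moves `x`, a contradiction follows. -/
theorem stmt15
    (adj : ℤ × ℤ → ℤ × ℤ → Prop) (hadj : adj = c1Adj ∨ adj = c2Adj)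
    (X : Set (ℤ × ℤ)) (hfin : X.Finite)
    (f : ℤ × ℤ → ℤ × ℤ) (hmaps : Set.MapsTo f X X)
    (hcont : ∀ x ∈ X, ∀ x' ∈ X, adj x x' → f x = f x' ∨ adj (f x) (f x'))
    (x : ℤ × ℤ) (hx : x ∈ X)
    (a₁ b₁ c₂ d₂ : ℤ)
    (hab : a₁ ≤ x.1 ∧ x.1 ≤ b₁) (hcd : c₂ ≤ x.2 ∧ x.2 ≤ d₂)
    (hH : ∀ t : ℤ, a₁ ≤ t → t ≤ b₁ → (t, x.2) ∈ X)
    (hV : ∀ t : ℤ, c₂ ≤ t → t ≤ d₂ → (x.1, t) ∈ X)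
    (hfa : f (a₁, x.2) = (a₁, x.2)) (hfb : f (b₁, x.2) = (b₁, x.2))
    (hfc : f (x.1, c₂) = (x.1, c₂)) (hfd : f (x.1, d₂) = (x.1, d₂))
    (hfx : f x ≠ x) :
    False := by
  obtain ⟨ha, hb⟩ := hab
  obtain ⟨hc, hd⟩ := hcd
  -- step bound for horizontal segment
  have hstepH : ∀ t, a₁ < t → t ≤ b₁ →
      |(f (t - 1, x.2)).1 - (f (t, x.2)).1| ≤ 1 := by
    intro t ht1 ht2
    have h1 : (t - 1, x.2) ∈ X := hH _ (by omega) (by omega)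
    have h2 : (t, x.2) ∈ X := hH _ (by omega) (by omega)
    rcases hcont _ h1 _ h2 (adj_step_h adj hadj t x.2) with heq | hA
    · rw [heq]; simp
    · exact (adj_coord adj hadj hA).1
  have hstepV : ∀ t, c₂ < t → t ≤ d₂ →
      |(f (x.1, t - 1)).2 - (f (x.1, t)).2| ≤ 1 := by
    intro t ht1 ht2
    have h1 : (x.1, t - 1) ∈ X := hV _ (by omega) (by omega)
    have h2 : (x.1, t) ∈ X := hV _ (by omega) (by omega)
    rcases hcont _ h1 _ h2 (adj_step_v adj hadj x.1 t) with heq | hA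
    · rw [heq]; simp
    · exact (adj_coord adj hadj hA).2
  have hxp : x = (x.1, x.2) := rfl
  have hne : (f x).1 ≠ x.1 ∨ (f x).2 ≠ x.2 := by
    by_contra h
    push_neg at h
    exact hfx (Prod.ext h.1 h.2)
  rcases hne with h1 | h2
  · rcases lt_or_gt_of_ne h1 with hlt | hgt
    · -- (f x).1 < x.1 : pull up to b₁
      have := pull_up (fun t => (f (t, x.2)).1) x.1 b₁ hb
        (fun t ht1 ht2 => hstepH t (by omega) ht2) (by simpa using hlt)
      simp [hfb] at this
    · have := pull_down (fun t => (f (t, x.2)).1) a₁ x.1 ha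
        (fun t ht1 ht2 => hstepH t ht1 (by omega)) (by simpa using hgt)
      simp [hfa] at this
  · rcases lt_or_gt_of_ne h2 with hlt | hgt
    · have := pull_up (fun t => (f (x.1, t)).2) x.2 d₂ hd
        (fun t ht1 ht2 => hstepV t (by omega) ht2) (by simpa using hlt)
      simp [hfd] at this
    · have := pull_down (fun t => (f (x.1, t)).2) c₂ x.2 hc
        (fun t ht1 ht2 => hstepV t ht1 (by omega)) (by simpa using hgt)
      simp [hfc] at this
end

section
/- Let D = [0,3]_ℤ × [0,3]_ℤ and let f be a c₁-continuous self-map of D fixing the four corners (0,0), (3,0), (0,3), (3,3). Then f is the identity on D. -/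
/-- A `c₁`-continuous self-map of `D = [0,3]_ℤ × [0,3]_ℤ` fixing the four
corners is the identity on `D`. -/
theorem stmt17
    (D : Set (ℤ × ℤ)) (hD : D = Set.Icc (0 : ℤ) 3 ×ˢ Set.Icc (0 : ℤ) 3)
    (f : ℤ × ℤ → ℤ × ℤ) (hmaps : Set.MapsTo f D D)
    (hcont : ∀ x ∈ D, ∀ x' ∈ D, c1Adj x x' → f x = f x' ∨ c1Adj (f x) (f x'))
    (h00 : f (0, 0) = (0, 0)) (h30 : f (3, 0) = (3, 0))
    (h03 : f (0, 3) = (0, 3)) (h33 : f (3, 3) = (3, 3)) :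
    ∀ x ∈ D, f x = x := by
  have mem_iff : ∀ p : ℤ × ℤ, p ∈ D ↔ (0 ≤ p.1 ∧ p.1 ≤ 3 ∧ 0 ≤ p.2 ∧ p.2 ≤ 3) := by
    intro p
    rw [hD]; simp only [Set.mem_prod, Set.mem_Icc]; tauto
  have step : ∀ x ∈ D, ∀ x' ∈ D, c1Adj x x' →
      |(f x).1 - (f x').1| + |(f x).2 - (f x').2| ≤ 1 := by
    intro x hx x' hx' h
    rcases hcont x hx x' hx' h with h | h
    · rw [h]; simp
    · exact le_of_eq h
  have pull : ∀ c : ℤ × ℤ, c ∈ D → f c = c → (c.1 = 0 ∨ c.1 = 3) → (c.2 = 0 ∨ c.2 = 3) →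
      ∀ n : ℕ, ∀ x ∈ D, |x.1 - c.1| + |x.2 - c.2| ≤ (n : ℤ) →
        |(f x).1 - c.1| + |(f x).2 - c.2| ≤ |x.1 - c.1| + |x.2 - c.2| := by
    intro c hc hfc hc1 hc2 n
    induction n with
    | zero =>
      intro x hx hle
      have h1 := abs_nonneg (x.1 - c.1)
      have h2 := abs_nonneg (x.2 - c.2)
      have e1 : x.1 - c.1 = 0 := by
        have : |x.1 - c.1| = 0 := le_antisymm (by push_cast at hle; linarith) h1
        exact abs_eq_zero.mp this
      have e2 : x.2 - c.2 = 0 := by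
        have : |x.2 - c.2| = 0 := le_antisymm (by push_cast at hle; linarith) h2
        exact abs_eq_zero.mp this
      have hxc : x = c := Prod.ext (by linarith) (by linarith)
      rw [hxc, hfc]
    | succ n ih =>
      intro x hx hle
      by_cases hxc : x = c
      · rw [hxc, hfc]
      · have hxm := (mem_iff x).mp hx
        have hne : x.1 ≠ c.1 ∨ x.2 ≠ c.2 := by
          by_contra h
          push_neg at h
          exact hxc (Prod.ext h.1 h.2)
        obtain ⟨x', hx'D, hadj, hdist⟩ :
            ∃ x', x' ∈ D ∧ c1Adj x x' ∧
              |x'.1 - c.1| + |x'.2 - c.2| + 1 = |x.1 - c.1| + |x.2 - c.2| := by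
          rcases hne with h1 | h2
          · rcases lt_or_gt_of_ne h1 with hlt | hgt
            · refine ⟨(x.1 + 1, x.2), (mem_iff _).mpr (by simp; omega), ?_, ?_⟩
              · simp [c1Adj]
              · simp only
                rcases abs_cases (x.1 - c.1) with ⟨e, _⟩ | ⟨e, _⟩ <;>
                  rcases abs_cases (x.1 + 1 - c.1) with ⟨e', _⟩ | ⟨e', _⟩ <;> omega
            · refine ⟨(x.1 - 1, x.2), (mem_iff _).mpr (by simp; omega), ?_, ?_⟩
              · simp [c1Adj]
              · simp only
                rcases abs_cases (x.1 - c.1) with ⟨e, _⟩ | ⟨e, _⟩ <;>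
                  rcases abs_cases (x.1 - 1 - c.1) with ⟨e', _⟩ | ⟨e', _⟩ <;> omega
          · rcases lt_or_gt_of_ne h2 with hlt | hgt
            · refine ⟨(x.1, x.2 + 1), (mem_iff _).mpr (by simp; omega), ?_, ?_⟩
              · simp [c1Adj]
              · simp only
                rcases abs_cases (x.2 - c.2) with ⟨e, _⟩ | ⟨e, _⟩ <;>
                  rcases abs_cases (x.2 + 1 - c.2) with ⟨e', _⟩ | ⟨e', _⟩ <;> omega
            · refine ⟨(x.1, x.2 - 1), (mem_iff _).mpr (by simp; omega), ?_, ?_⟩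
              · simp [c1Adj]
              · simp only
                rcases abs_cases (x.2 - c.2) with ⟨e, _⟩ | ⟨e, _⟩ <;>
                  rcases abs_cases (x.2 - 1 - c.2) with ⟨e', _⟩ | ⟨e', _⟩ <;> omega
        have hd' := ih x' hx'D (by push_cast; push_cast at hle; linarith)
        have hs := step x hx x' hx'D hadj
        have t1 : |(f x).1 - c.1| ≤ |(f x).1 - (f x').1| + |(f x').1 - c.1| :=
          abs_sub_le _ _ _
        have t2 : |(f x).2 - c.2| ≤ |(f x).2 - (f x').2| + |(f x').2 - c.2| :=
          abs_sub_le _ _ _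
        linarith
  have c00 : (0, 0) ∈ D := (mem_iff _).mpr (by norm_num)
  have c30 : (3, 0) ∈ D := (mem_iff _).mpr (by norm_num)
  have c03 : (0, 3) ∈ D := (mem_iff _).mpr (by norm_num)
  have c33 : (3, 3) ∈ D := (mem_iff _).mpr (by norm_num)
  intro x hx
  have hxm := (mem_iff x).mp hx
  have hfm := (mem_iff (f x)).mp (hmaps hx)
  have p00 := pull (0, 0) c00 h00 (Or.inl rfl) (Or.inl rfl) 6 x hx
    (by simp only; rcases abs_cases (x.1 - 0) with ⟨e, _⟩ | ⟨e, _⟩ <;>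
      rcases abs_cases (x.2 - 0) with ⟨e', _⟩ | ⟨e', _⟩ <;> push_cast <;> omega)
  have p33 := pull (3, 3) c33 h33 (Or.inr rfl) (Or.inr rfl) 6 x hx
    (by simp only; rcases abs_cases (x.1 - 3) with ⟨e, _⟩ | ⟨e, _⟩ <;>
      rcases abs_cases (x.2 - 3) with ⟨e', _⟩ | ⟨e', _⟩ <;> push_cast <;> omega)
  have p30 := pull (3, 0) c30 h30 (Or.inr rfl) (Or.inl rfl) 6 x hx
    (by simp only; rcases abs_cases (x.1 - 3) with ⟨e, _⟩ | ⟨e, _⟩ <;>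
      rcases abs_cases (x.2 - 0) with ⟨e', _⟩ | ⟨e', _⟩ <;> push_cast <;> omega)
  have p03 := pull (0, 3) c03 h03 (Or.inl rfl) (Or.inr rfl) 6 x hx
    (by simp only; rcases abs_cases (x.1 - 0) with ⟨e, _⟩ | ⟨e, _⟩ <;>
      rcases abs_cases (x.2 - 3) with ⟨e', _⟩ | ⟨e', _⟩ <;> push_cast <;> omega)
  simp only at p00 p33 p30 p03
  have a1 : |(f x).1 - 0| = (f x).1 := by rw [sub_zero]; exact abs_of_nonneg hfm.1
  have a2 : |(f x).2 - 0| = (f x).2 := by rw [sub_zero]; exact abs_of_nonneg hfm.2.2.1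
  have a3 : |(f x).1 - 3| = 3 - (f x).1 := by
    rw [abs_of_nonpos (by omega)]; ring
  have a4 : |(f x).2 - 3| = 3 - (f x).2 := by
    rw [abs_of_nonpos (by omega)]; ring
  have b1 : |x.1 - 0| = x.1 := by rw [sub_zero]; exact abs_of_nonneg hxm.1
  have b2 : |x.2 - 0| = x.2 := by rw [sub_zero]; exact abs_of_nonneg hxm.2.2.1
  have b3 : |x.1 - 3| = 3 - x.1 := by
    rw [abs_of_nonpos (by omega)]; ring
  have b4 : |x.2 - 3| = 3 - x.2 := by
    rw [abs_of_nonpos (by omega)]; ring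
  rw [a1, a2, b1, b2] at p00
  rw [a3, a4, b3, b4] at p33
  rw [a3, a2, b3, b2] at p30
  rw [a1, a4, b1, b4] at p03
  exact Prod.ext (by omega) (by omega)
end

section
/- Let X = [0,m₁]_ℤ × [0,m₂]_ℤ with m₁, m₂ ≥ 2, and let p = (0,0). Define f : X → X by f(p) = (1,1) and f(x) = x for x ≠ p. Then f is c₁-continuous and Fix(f) = X \ {p}. -/
lemma c1Adj_iff (p q : ℤ × ℤ) : c1Adj p q ↔ |p.1 - q.1| + |p.2 - q.2| = 1 := Iff.rfl

/-- On `X = [0,m₁]_ℤ × [0,m₂]_ℤ` with `m₁, m₂ ≥ 2`, the map sending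
`(0,0)` to `(1,1)` and fixing everything else is a `c₁`-continuous self-map
of `X` with fixed point set `X \ {(0,0)}`. -/
theorem stmt18 (m₁ m₂ : ℤ) (hm₁ : 2 ≤ m₁) (hm₂ : 2 ≤ m₂)
    (X : Set (ℤ × ℤ)) (hX : X = Set.Icc 0 m₁ ×ˢ Set.Icc 0 m₂)
    (f : ℤ × ℤ → ℤ × ℤ)
    (hf : f = fun x => if x = ((0 : ℤ), (0 : ℤ)) then ((1 : ℤ), (1 : ℤ)) else x) :
    Set.MapsTo f X X ∧
      (∀ x ∈ X, ∀ x' ∈ X, c1Adj x x' → f x = f x' ∨ c1Adj (f x) (f x')) ∧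
      (∀ x ∈ X, (f x = x ↔ x ≠ ((0 : ℤ), (0 : ℤ)))) := by
  subst hX hf
  refine ⟨?_, ?_, ?_⟩
  · intro x hx
    by_cases h : x = ((0:ℤ), (0:ℤ))
    · subst h
      beta_reduce
      rw [if_pos rfl]
      simp only [Set.mem_prod, Set.mem_Icc]
      constructor <;> constructor <;> omega
    · simpa only [if_neg h] using hx
  · intro x hx x' hx' hadj
    simp only [Set.mem_prod, Set.mem_Icc] at hx hx'
    rw [c1Adj_iff] at hadj
    by_cases h : x = ((0:ℤ), (0:ℤ)) <;> by_cases h' : x' = ((0:ℤ), (0:ℤ))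
    · left; simp [h, h']
    · right
      subst h
      beta_reduce
      rw [if_pos rfl, if_neg h']
      show |(1:ℤ) - x'.1| + |(1:ℤ) - x'.2| = 1
      have hx'ne : x'.1 ≠ 0 ∨ x'.2 ≠ 0 := by
        by_contra hc; push_neg at hc
        exact h' (Prod.ext hc.1 hc.2)
      rcases abs_cases (x'.1 : ℤ) with ⟨e1, _⟩ | ⟨e1, _⟩ <;>
      rcases abs_cases (x'.2 : ℤ) with ⟨e2, _⟩ | ⟨e2, _⟩ <;>
      rcases abs_cases ((1:ℤ) - x'.1) with ⟨f1, _⟩ | ⟨f1, _⟩ <;>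
      rcases abs_cases ((1:ℤ) - x'.2) with ⟨f2, _⟩ | ⟨f2, _⟩ <;>
      simp only [zero_sub, abs_neg] at hadj <;> omega
    · right
      subst h'
      beta_reduce
      rw [if_pos rfl, if_neg h]
      show |x.1 - (1:ℤ)| + |x.2 - (1:ℤ)| = 1
      have hxne : x.1 ≠ 0 ∨ x.2 ≠ 0 := by
        by_contra hc; push_neg at hc
        exact h (Prod.ext hc.1 hc.2)
      rcases abs_cases (x.1 : ℤ) with ⟨e1, _⟩ | ⟨e1, _⟩ <;>
      rcases abs_cases (x.2 : ℤ) with ⟨e2, _⟩ | ⟨e2, _⟩ <;>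
      rcases abs_cases (x.1 - 1) with ⟨f1, _⟩ | ⟨f1, _⟩ <;>
      rcases abs_cases (x.2 - 1) with ⟨f2, _⟩ | ⟨f2, _⟩ <;>
      simp only [sub_zero] at hadj <;> omega
    · right; beta_reduce; rw [if_neg h, if_neg h']; exact hadj
  · intro x hx
    by_cases h : x = ((0:ℤ), (0:ℤ))
    · subst h
      beta_reduce
      rw [if_pos rfl]
      exact ⟨fun hc => absurd hc (by decide), fun hc => absurd rfl hc⟩
    · beta_reduce
      rw [if_neg h]
      exact ⟨fun _ => h, fun _ => rfl⟩
end
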